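/- Let S = (s_1,…,s_N) and S' = (s'_1,…,s'_N) be two independent p-random sequences of strings of length K, with shuffle graphs G, G'. For i ∈ {0,…,N} let G_i and G'_i be the induced subgraphs of G and G' on the vertex set {1,…,i}, and let F_i be the σ-algebra generated by (s_1,…,s_i, s'_1,…,s'_i). Suppose γ > 0 is such that for every i ∈ {1,…,N}, almost surely E[ |E_forward(G,G')| − |E(G_i) ∩ E(G'_i)| | F_i ] ≤ γ. Then for every t > 0 satisfying e^t·γ ≤ 1/10, one has E[exp(t·|E_forward(G,G')|)] ≤ 1 + 2·e^t·γ. -/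

import Mathlib

open Finset

namespace RiffleShuffle

/-- `phi p t = ∑ i, p i ^ t`. -/
noncomputable def phi {k : ℕ} (p : Fin k → ℝ) (t : ℝ) : ℝ := ∑ i, p i ^ t

/-- `psi p t = - log (phi p t)`. -/
noncomputable def psi {k : ℕ} (p : Fin k → ℝ) (t : ℝ) : ℝ := - Real.log (phi p t)

/-- The maximal entry of `p`. -/
noncomputable def pmax {k : ℕ} (p : Fin k → ℝ) : ℝ := ⨆ i, p i

/-- The minimal entry of `p`. -/
noncomputable def pmin {k : ℕ} (p : Fin k → ℝ) : ℝ := ⨅ i, p i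

/-- `C_p = (3+θ)/(4 ψ_p(2))`, where `θ` is the solution of `φ_p(θ) = φ_p(2)²`. -/
noncomputable def Cmain {k : ℕ} (p : Fin k → ℝ) (θ : ℝ) : ℝ := (3 + θ) / (4 * psi p 2)

/-- `C̃_p = 1/log(1/p_max)`. -/
noncomputable def Ctilde {k : ℕ} (p : Fin k → ℝ) : ℝ := 1 / Real.log (1 / pmax p)

/-- `C̄_p = max(C̃_p, C_p)`. -/
noncomputable def Cbar {k : ℕ} (p : Fin k → ℝ) (θ : ℝ) : ℝ := max (Ctilde p) (Cmain p θ)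

/-- Strings of length `K` over the alphabet `{0,…,k-1}`. -/
abbrev Str (k K : ℕ) := Fin K → Fin k

/-- Probability of an individual string, all digits i.i.d. with law `p`. -/
noncomputable def strP {k : ℕ} (p : Fin k → ℝ) {K : ℕ} (s : Str k K) : ℝ := ∏ j, p (s j)

/-- Probability of a tuple of `N` i.i.d. `p`-random strings. -/
noncomputable def seqP {k : ℕ} (p : Fin k → ℝ) {N K : ℕ} (ω : Fin N → Str k K) : ℝ :=
  ∏ i, strP p (ω i)

/-- The base-`k` value of a string; comparing these values is exactly the lexicographic
order on strings of the same length. -/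
def lexVal {k K : ℕ} (s : Str k K) : ℕ := ∑ j : Fin K, (s j : ℕ) * k ^ (K - 1 - (j : ℕ))

/-- The lexicographically sorted rearrangement of a tuple of strings. -/
noncomputable def sortedSeq {k N K : ℕ} (ω : Fin N → Str k K) : Fin N → Str k K :=
  fun i => ω (Tuple.sort (fun j => lexVal (ω j)) i)

/-- The edge set of the shuffle graph of a (sorted) sequence of strings: the edge between
`i` and `i+1` is present iff `s i = s (i+1)`; edges are recorded as pairs `(i, i+1)`. -/
def edgeSet {k N K : ℕ} (s : Fin N → Str k K) : Finset (Fin N × Fin N) :=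
  univ.filter (fun e => (e.2 : ℕ) = (e.1 : ℕ) + 1 ∧ s e.1 = s e.2)

/-- `s` begins with two digits equal to `d`. -/
def beginsWith2 {k : ℕ} (d : Fin k) {K : ℕ} (s : Str k K) : Prop :=
  ∃ h : 2 ≤ K, s ⟨0, by omega⟩ = d ∧ s ⟨1, by omega⟩ = d

instance {k K : ℕ} (d : Fin k) (s : Str k K) : Decidable (beginsWith2 d s) :=
  exists_prop_decidable _

/-- The edges of the shuffle graph of `s` whose common string does **not** begin with two
digits equal to `d`.  For `d = k-1` this is `E_forward(G)`, for `d = 0` it is `E_backward(G)`. -/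
def edgesAvoiding {k N K : ℕ} (d : Fin k) (s : Fin N → Str k K) : Finset (Fin N × Fin N) :=
  (edgeSet s).filter (fun e => ¬ beginsWith2 d (s e.1))

section Aux
variable {k N K : ℕ}

lemma strP_nonneg {p : Fin k → ℝ} (hpos : ∀ i, 0 < p i) (s : Str k K) : 0 ≤ strP p s :=
  Finset.prod_nonneg fun j _ => (hpos _).le

lemma sum_strP {p : Fin k → ℝ} (hsum : ∑ i, p i = 1) : ∑ s : Str k K, strP p s = 1 := by
  unfold strP
  rw [← Fintype.piFinset_univ, ← Finset.prod_univ_sum]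
  simp [hsum]

lemma seqP_nonneg {p : Fin k → ℝ} (hpos : ∀ i, 0 < p i) (ω : Fin N → Str k K) : 0 ≤ seqP p ω :=
  Finset.prod_nonneg fun j _ => strP_nonneg hpos _

lemma sum_seqP {p : Fin k → ℝ} (hsum : ∑ i, p i = 1) :
    ∑ ω : Fin N → Str k K, seqP p ω = 1 := by
  unfold seqP
  rw [← Fintype.piFinset_univ, ← Finset.prod_univ_sum]
  simp [sum_strP hsum]

lemma sum_val_pow_le (k : ℕ) (hk : 1 ≤ k) : ∀ (m : ℕ) (f : Fin m → ℕ), (∀ i, f i ≤ k - 1) →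
    ∑ i : Fin m, f i * k ^ (m - 1 - (i : ℕ)) ≤ k ^ m - 1 := by
  intro m
  induction m with
  | zero => intro f _; simp
  | succ n ih =>
    intro f hf
    rw [Fin.sum_univ_succ]
    have hexp : ∀ i : Fin n, n + 1 - 1 - ((i.succ : Fin (n+1)) : ℕ) = n - 1 - (i : ℕ) := by
      intro i; simp only [Fin.val_succ]; omega
    have htail : ∑ i : Fin n, f i.succ * k ^ (n + 1 - 1 - ((i.succ : Fin (n+1)) : ℕ))
        ≤ k ^ n - 1 := by
      calc ∑ i : Fin n, f i.succ * k ^ (n + 1 - 1 - ((i.succ : Fin (n+1)) : ℕ))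
          = ∑ i : Fin n, f i.succ * k ^ (n - 1 - (i : ℕ)) := by
            exact Finset.sum_congr rfl fun i _ => by rw [hexp]
        _ ≤ k ^ n - 1 := ih (fun i => f i.succ) (fun i => hf _)
    have hhead : f 0 * k ^ (n + 1 - 1 - ((0 : Fin (n+1)) : ℕ)) ≤ (k - 1) * k ^ n := by
      simp only [Fin.val_zero, Nat.sub_zero]
      exact Nat.mul_le_mul_right _ (hf 0)
    have hkn : 1 ≤ k ^ n := Nat.one_le_pow _ _ hk
    have hle : k ^ n ≤ k * k ^ n := Nat.le_mul_of_pos_left _ (by omega)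
    have hpow : (k - 1) * k ^ n + (k ^ n - 1) = k ^ (n + 1) - 1 := by
      have h2 : k ^ (n + 1) = k * k ^ n := by ring
      have h3 : (k - 1) * k ^ n = k * k ^ n - k ^ n := by
        rw [Nat.sub_mul, Nat.one_mul]
      omega
    simp only [Fin.val_zero, Nat.sub_zero, Nat.add_sub_cancel] at hhead htail ⊢
    omega

lemma lexVal_split {m : ℕ} (s : Str k (m + 2)) :
    lexVal s = (s 0 : ℕ) * k ^ (m + 1) + (s 1 : ℕ) * k ^ m +
      ∑ i : Fin m, (s i.succ.succ : ℕ) * k ^ (m - 1 - (i : ℕ)) := by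
  unfold lexVal
  rw [Fin.sum_univ_succ, Fin.sum_univ_succ]
  have h0 : m + 2 - 1 - ((0 : Fin (m+2)) : ℕ) = m + 1 := by simp
  have h1 : m + 2 - 1 - (((0 : Fin (m+1)).succ : Fin (m+2)) : ℕ) = m := by simp
  have hsum : ∑ i : Fin m, (s i.succ.succ : ℕ) * k ^ (m + 2 - 1 - ((i.succ.succ : Fin (m+2)) : ℕ))
      = ∑ i : Fin m, (s i.succ.succ : ℕ) * k ^ (m - 1 - (i : ℕ)) := by
    apply Finset.sum_congr rfl
    intro i _
    have : m + 2 - 1 - ((i.succ.succ : Fin (m+2)) : ℕ) = m - 1 - (i : ℕ) := by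
      simp only [Fin.val_succ]; omega
    rw [this]
  rw [h0, h1, hsum, Fin.succ_zero_eq_one]
  ring

end Aux
section Aux2
variable {k N K : ℕ}

lemma beginsWith2_of_le (hk : 1 ≤ k) (d : Fin k) (hd : (d : ℕ) = k - 1)
    {s' s : Str k K} (h : lexVal s' ≤ lexVal s) (hb : beginsWith2 d s') :
    beginsWith2 d s := by
  obtain ⟨hK, h0, h1⟩ := hb
  obtain ⟨m, rfl⟩ : ∃ m, K = m + 2 := ⟨K - 2, by omega⟩
  have z0 : (⟨0, by omega⟩ : Fin (m + 2)) = 0 := rfl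
  have z1 : (⟨1, by omega⟩ : Fin (m + 2)) = 1 := rfl
  rw [z0] at h0
  rw [z1] at h1
  refine ⟨hK, ?_⟩
  rw [z0, z1]
  have hkn : 1 ≤ k ^ m := Nat.one_le_pow _ _ hk
  have hAB : k ^ m ≤ k ^ (m + 1) := Nat.pow_le_pow_right hk (by omega)
  have hsplit := lexVal_split s
  have hsplit' := lexVal_split s'
  have htail : ∑ i : Fin m, (s i.succ.succ : ℕ) * k ^ (m - 1 - (i : ℕ)) ≤ k ^ m - 1 :=
    sum_val_pow_le k hk m _ (fun i => by have := (s i.succ.succ).isLt; omega)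
  have htail' : 0 ≤ ∑ i : Fin m, (s' i.succ.succ : ℕ) * k ^ (m - 1 - (i : ℕ)) := Nat.zero_le _
  have hv0 : (s' 0 : ℕ) = k - 1 := by rw [h0, hd]
  have hv1 : (s' 1 : ℕ) = k - 1 := by rw [h1, hd]
  have hlow : (k - 1) * k ^ (m + 1) + (k - 1) * k ^ m ≤ lexVal s' := by
    rw [hsplit', hv0, hv1]; omega
  have hs0 : (s 0 : ℕ) ≤ k - 1 := by have := (s 0).isLt; omega
  have hs1 : (s 1 : ℕ) ≤ k - 1 := by have := (s 1).isLt; omega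
  -- we show (s 0 : ℕ) = k - 1 and (s 1 : ℕ) = k - 1
  have key : (s 0 : ℕ) = k - 1 ∧ (s 1 : ℕ) = k - 1 := by
    by_contra hcon
    push_neg at hcon
    have hcase : (s 0 : ℕ) + 1 ≤ k - 1 ∨ ((s 0 : ℕ) = k - 1 ∧ (s 1 : ℕ) + 1 ≤ k - 1) := by
      by_cases hc : (s 0 : ℕ) = k - 1
      · right; exact ⟨hc, by have := hcon hc; omega⟩
      · left; omega
    have hup : lexVal s + 1 ≤ (k - 1) * k ^ (m + 1) + (k - 1) * k ^ m := by
      rcases hcase with hc | ⟨hc0, hc1⟩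
      · have e0 : (s 0 : ℕ) * k ^ (m + 1) + k ^ (m + 1) ≤ (k - 1) * k ^ (m + 1) := by
          have : ((s 0 : ℕ) + 1) * k ^ (m + 1) ≤ (k - 1) * k ^ (m + 1) :=
            Nat.mul_le_mul_right _ hc
          rw [Nat.add_mul, Nat.one_mul] at this
          omega
        have e1 : (s 1 : ℕ) * k ^ m ≤ (k - 1) * k ^ m := Nat.mul_le_mul_right _ hs1
        rw [hsplit]
        omega
      · have e1 : (s 1 : ℕ) * k ^ m + k ^ m ≤ (k - 1) * k ^ m := by
          have : ((s 1 : ℕ) + 1) * k ^ m ≤ (k - 1) * k ^ m := Nat.mul_le_mul_right _ hc1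
          rw [Nat.add_mul, Nat.one_mul] at this
          omega
        rw [hsplit, hc0]
        omega
    omega
  constructor
  · exact Fin.ext (by rw [key.1, hd])
  · exact Fin.ext (by rw [key.2, hd])

lemma sortedSeq_mono (ω : Fin N → Str k K) {i j : Fin N} (hij : i ≤ j) :
    lexVal (sortedSeq ω i) ≤ lexVal (sortedSeq ω j) :=
  Tuple.monotone_sort (fun j => lexVal (ω j)) hij

lemma begins_mono (hk : 1 ≤ k) (d : Fin k) (hd : (d : ℕ) = k - 1) (ω : Fin N → Str k K)
    {i j : Fin N} (hij : i ≤ j) (h : beginsWith2 d (sortedSeq ω i)) :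
    beginsWith2 d (sortedSeq ω j) :=
  beginsWith2_of_le hk d hd (sortedSeq_mono ω hij) h

end Aux2
section Aux3
variable {k N K : ℕ}

/-- Pairs of string sequences. -/
abbrev Pair (k N K : ℕ) := (Fin N → Str k K) × (Fin N → Str k K)

noncomputable def wP (p : Fin k → ℝ) (z : Pair k N K) : ℝ := seqP p z.1 * seqP p z.2

lemma wP_nonneg {p : Fin k → ℝ} (hpos : ∀ i, 0 < p i) (z : Pair k N K) : 0 ≤ wP p z :=
  mul_nonneg (seqP_nonneg hpos _) (seqP_nonneg hpos _)

lemma sum_wP {p : Fin k → ℝ} (hsum : ∑ i, p i = 1) : ∑ z : Pair k N K, wP p z = 1 := by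
  rw [Fintype.sum_prod_type]
  simp only [wP]
  rw [← Finset.sum_mul_sum]
  rw [sum_seqP hsum, mul_one]

noncomputable def Fset (d : Fin k) (z : Pair k N K) : Finset (Fin N × Fin N) :=
  edgesAvoiding d (sortedSeq z.1) ∩ edgesAvoiding d (sortedSeq z.2)

noncomputable def Eset (z : Pair k N K) : Finset (Fin N × Fin N) :=
  edgeSet (sortedSeq z.1) ∩ edgeSet (sortedSeq z.2)

noncomputable def Xc (d : Fin k) (z : Pair k N K) : ℕ := (Fset d z).card

noncomputable def Zf (d : Fin k) (i : ℕ) (z : Pair k N K) : ℕ :=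
  ((Fset d z).filter (fun e => (e.2 : ℕ) < i)).card

noncomputable def Za (i : ℕ) (z : Pair k N K) : ℕ :=
  ((Eset z).filter (fun e => (e.2 : ℕ) < i)).card

lemma mem_edgeSet {s : Fin N → Str k K} {e : Fin N × Fin N} :
    e ∈ edgeSet s ↔ (e.2 : ℕ) = (e.1 : ℕ) + 1 ∧ s e.1 = s e.2 := by
  simp [edgeSet]

lemma mem_edgesAvoiding {d : Fin k} {s : Fin N → Str k K} {e : Fin N × Fin N} :
    e ∈ edgesAvoiding d s ↔
      ((e.2 : ℕ) = (e.1 : ℕ) + 1 ∧ s e.1 = s e.2) ∧ ¬ beginsWith2 d (s e.1) := by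
  simp [edgesAvoiding, mem_edgeSet]

lemma Fset_subset_Eset (d : Fin k) (z : Pair k N K) : Fset d z ⊆ Eset z :=
  Finset.inter_subset_inter (Finset.filter_subset _ _) (Finset.filter_subset _ _)

lemma succ_of_mem_Eset {z : Pair k N K} {e : Fin N × Fin N} (h : e ∈ Eset z) :
    (e.2 : ℕ) = (e.1 : ℕ) + 1 :=
  (mem_edgeSet.mp (Finset.mem_inter.mp h).1).1

lemma Zf_mono (d : Fin k) {i i' : ℕ} (h : i ≤ i') (z : Pair k N K) : Zf d i z ≤ Zf d i' z := by
  apply Finset.card_le_card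
  intro e he
  rw [Finset.mem_filter] at he ⊢
  exact ⟨he.1, by omega⟩

lemma Zf_apex (d : Fin k) (z : Pair k N K) : Zf d N z = Xc d z := by
  unfold Zf Xc
  rw [Finset.filter_true_of_mem (fun e _ => e.2.isLt)]

lemma Zf_le_Xc (d : Fin k) (i : ℕ) (z : Pair k N K) : Zf d i z ≤ Xc d z :=
  Finset.card_le_card (Finset.filter_subset _ _)

lemma Zf_zero (d : Fin k) (z : Pair k N K) : Zf d 0 z = 0 := by
  unfold Zf
  rw [Finset.filter_false_of_mem (fun e _ => by omega)]
  simp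

lemma Zf_one (d : Fin k) (z : Pair k N K) : Zf d 1 z = 0 := by
  unfold Zf
  rw [Finset.filter_false_of_mem]
  · simp
  · intro e he
    have := succ_of_mem_Eset (Fset_subset_Eset d z he)
    omega

lemma Za_one (z : Pair k N K) : Za 1 z = 0 := by
  unfold Za
  rw [Finset.filter_false_of_mem]
  · simp
  · intro e he
    have := succ_of_mem_Eset he
    omega

lemma Zf_succ_le (d : Fin k) (i : ℕ) (z : Pair k N K) : Zf d (i + 1) z ≤ Zf d i z + 1 := by
  unfold Zf
  have hsub : ((Fset d z).filter (fun e => (e.2 : ℕ) < i + 1)) \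
      ((Fset d z).filter (fun e => (e.2 : ℕ) < i)) ⊆
      ((Fset d z).filter (fun e => (e.2 : ℕ) < i + 1)) := Finset.sdiff_subset
  have hcard1 : (((Fset d z).filter (fun e => (e.2 : ℕ) < i + 1)) \
      ((Fset d z).filter (fun e => (e.2 : ℕ) < i))).card ≤ 1 := by
    apply Finset.card_le_one.mpr
    intro a ha b hb
    rw [Finset.mem_sdiff] at ha hb
    obtain ⟨haIn, haOut⟩ := ha
    obtain ⟨hbIn, hbOut⟩ := hb
    rw [Finset.mem_filter] at haIn hbIn
    have haNot : ¬ ((a.2 : ℕ) < i) := fun hlt => haOut (Finset.mem_filter.mpr ⟨haIn.1, hlt⟩)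
    have hbNot : ¬ ((b.2 : ℕ) < i) := fun hlt => hbOut (Finset.mem_filter.mpr ⟨hbIn.1, hlt⟩)
    have ha2 : (a.2 : ℕ) = i := by
      have := haIn.2
      omega
    have hb2 : (b.2 : ℕ) = i := by
      have := hbIn.2
      omega
    have ha : a ∈ Fset d z := haIn.1
    have hb : b ∈ Fset d z := hbIn.1
    have ha1 := succ_of_mem_Eset (Fset_subset_Eset d z ha)
    have hb1 := succ_of_mem_Eset (Fset_subset_Eset d z hb)
    have : a.1 = b.1 := Fin.ext (by omega)
    have : a.2 = b.2 := Fin.ext (by omega)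
    exact Prod.ext ‹a.1 = b.1› ‹a.2 = b.2›
  calc ((Fset d z).filter (fun e => (e.2 : ℕ) < i + 1)).card
      ≤ (((Fset d z).filter (fun e => (e.2 : ℕ) < i + 1)) \
          ((Fset d z).filter (fun e => (e.2 : ℕ) < i))).card +
        ((Fset d z).filter (fun e => (e.2 : ℕ) < i)).card :=
        Finset.card_le_card_sdiff_add_card
    _ ≤ ((Fset d z).filter (fun e => (e.2 : ℕ) < i)).card + 1 := by omega

lemma Zf_le_Za (d : Fin k) (i : ℕ) (z : Pair k N K) : Zf d i z ≤ Za i z :=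
  Finset.card_le_card (Finset.filter_subset_filter _ (Fset_subset_Eset d z))

lemma Xc_le_N (d : Fin k) (z : Pair k N K) : Xc d z ≤ N := by
  have : Xc d z ≤ (Finset.univ : Finset (Fin N)).card := by
    apply Finset.card_le_card_of_injOn (fun e => e.1) (fun e _ => Finset.mem_univ _)
    intro a ha b hb hab
    simp only [Finset.mem_coe] at ha hb
    have ha1 := succ_of_mem_Eset (Fset_subset_Eset d z ha)
    have hb1 := succ_of_mem_Eset (Fset_subset_Eset d z hb)
    have h1 : a.1 = b.1 := hab
    refine Prod.ext h1 (Fin.ext ?_)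
    have : (a.1 : ℕ) = (b.1 : ℕ) := by rw [h1]
    omega
  simpa using this

/-- If some revealed shared edge is not a forward shared edge, then all forward
shared edges are already revealed. -/
lemma Xc_eq_of_lt (hk : 1 ≤ k) (d : Fin k) (hd : (d : ℕ) = k - 1) {i : ℕ} {z : Pair k N K}
    (h : Zf d i z < Za i z) : Xc d z = Zf d i z := by
  classical
  have hnot : ¬ ((Eset z).filter (fun e => (e.2 : ℕ) < i) ⊆
      (Fset d z).filter (fun e => (e.2 : ℕ) < i)) := by
    intro hsub
    exact absurd (Finset.card_le_card hsub) (by unfold Zf Za at h; omega)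
  obtain ⟨e, he, hne⟩ := Finset.not_subset.mp hnot
  simp only [Finset.mem_filter] at he hne
  have heE := he.1
  have heI := he.2
  have heF : e ∉ Fset d z := fun hf => hne ⟨hf, heI⟩
  have he2 : (e.2 : ℕ) = (e.1 : ℕ) + 1 := succ_of_mem_Eset heE
  rw [Eset, Finset.mem_inter] at heE
  have hbeg : beginsWith2 d (sortedSeq z.1 e.1) ∨ beginsWith2 d (sortedSeq z.2 e.1) := by
    by_contra hcon
    push_neg at hcon
    apply heF
    rw [Fset, Finset.mem_inter]
    constructor
    · rw [mem_edgesAvoiding]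
      exact ⟨mem_edgeSet.mp heE.1, hcon.1⟩
    · rw [mem_edgesAvoiding]
      exact ⟨mem_edgeSet.mp heE.2, hcon.2⟩
  have hall : ∀ f ∈ Fset d z, (f.2 : ℕ) < i := by
    intro f hf
    have hf2 : (f.2 : ℕ) = (f.1 : ℕ) + 1 := succ_of_mem_Eset (Fset_subset_Eset d z hf)
    rw [Fset, Finset.mem_inter, mem_edgesAvoiding, mem_edgesAvoiding] at hf
    have hlt : (f.1 : ℕ) < (e.1 : ℕ) := by
      by_contra hge
      push_neg at hge
      have hle : e.1 ≤ f.1 := by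
        rw [Fin.le_def]; exact hge
      rcases hbeg with hb | hb
      · exact hf.1.2 (begins_mono hk d hd z.1 hle hb)
      · exact hf.2.2 (begins_mono hk d hd z.2 hle hb)
    omega
  unfold Xc Zf
  rw [Finset.filter_true_of_mem hall]

end Aux3
section Aux4
variable {k N K : ℕ}

lemma edgesAvoiding_filter_prefix (d : Fin k) {i i' : ℕ} (hi : i' ≤ i)
    {s s' : Fin N → Str k K} (h : ∀ j : Fin N, (j : ℕ) < i → s j = s' j) :
    (edgesAvoiding d s).filter (fun e => (e.2 : ℕ) < i') =
      (edgesAvoiding d s').filter (fun e => (e.2 : ℕ) < i') := by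
  have aux : ∀ (u v : Fin N → Str k K), (∀ j : Fin N, (j : ℕ) < i → u j = v j) →
      ∀ e, e ∈ (edgesAvoiding d u).filter (fun e => (e.2 : ℕ) < i') →
        e ∈ (edgesAvoiding d v).filter (fun e => (e.2 : ℕ) < i') := by
    intro u v huv e he
    rw [Finset.mem_filter, mem_edgesAvoiding] at he ⊢
    obtain ⟨⟨⟨h21, heq⟩, hnb⟩, hlt⟩ := he
    have he2 : (e.2 : ℕ) < i := by omega
    have he1 : (e.1 : ℕ) < i := by omega
    rw [← huv e.1 he1, ← huv e.2 he2]
    exact ⟨⟨⟨h21, heq⟩, hnb⟩, hlt⟩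
  ext e
  constructor
  · exact aux s s' h e
  · exact aux s' s (fun j hj => (h j hj).symm) e

lemma edgeSet_filter_prefix {i i' : ℕ} (hi : i' ≤ i)
    {s s' : Fin N → Str k K} (h : ∀ j : Fin N, (j : ℕ) < i → s j = s' j) :
    (edgeSet s).filter (fun e => (e.2 : ℕ) < i') =
      (edgeSet s').filter (fun e => (e.2 : ℕ) < i') := by
  have aux : ∀ (u v : Fin N → Str k K), (∀ j : Fin N, (j : ℕ) < i → u j = v j) →
      ∀ e, e ∈ (edgeSet u).filter (fun e => (e.2 : ℕ) < i') →
        e ∈ (edgeSet v).filter (fun e => (e.2 : ℕ) < i') := by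
    intro u v huv e he
    rw [Finset.mem_filter, mem_edgeSet] at he ⊢
    obtain ⟨⟨h21, heq⟩, hlt⟩ := he
    have he2 : (e.2 : ℕ) < i := by omega
    have he1 : (e.1 : ℕ) < i := by omega
    rw [← huv e.1 he1, ← huv e.2 he2]
    exact ⟨⟨h21, heq⟩, hlt⟩
  ext e
  constructor
  · exact aux s s' h e
  · exact aux s' s (fun j hj => (h j hj).symm) e

/-- The prefix-agreement relation used by the conditioning. -/
def PrefAgree (i : ℕ) (z z' : Pair k N K) : Prop :=
  (∀ j : Fin N, (j : ℕ) < i → sortedSeq z.1 j = sortedSeq z'.1 j) ∧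
  (∀ j : Fin N, (j : ℕ) < i → sortedSeq z.2 j = sortedSeq z'.2 j)

lemma Zf_prefix (d : Fin k) {i i' : ℕ} (hi : i' ≤ i) {z z' : Pair k N K}
    (h : PrefAgree i z z') : Zf d i' z = Zf d i' z' := by
  unfold Zf Fset
  rw [Finset.filter_inter_distrib, Finset.filter_inter_distrib,
    edgesAvoiding_filter_prefix d hi h.1, edgesAvoiding_filter_prefix d hi h.2]

lemma Za_prefix {i i' : ℕ} (hi : i' ≤ i) {z z' : Pair k N K}
    (h : PrefAgree i z z') : Za i' z = Za i' z' := by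
  unfold Za Eset
  rw [Finset.filter_inter_distrib, Finset.filter_inter_distrib,
    edgeSet_filter_prefix hi h.1, edgeSet_filter_prefix hi h.2]

/-- The stopping condition: `i` is the first stage at which `m` forward shared edges
have been revealed, no non-forward shared edge has been revealed, and `1 ≤ i ≤ N`. -/
def stopP (d : Fin k) (m i : ℕ) (z : Pair k N K) : Prop :=
  1 ≤ i ∧ i ≤ N ∧ Zf d i z = m ∧ Za i z = m ∧
    ∀ j : ℕ, j < i → 1 ≤ j → Zf d j z ≠ m

noncomputable instance stopP_dec (d : Fin k) (m i : ℕ) (z : Pair k N K) : Decidable (stopP d m i z) := by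
  unfold stopP
  infer_instance

lemma stopP_le_Xc {d : Fin k} {m i : ℕ} {z : Pair k N K} (h : stopP d m i z) :
    m ≤ Xc d z := by
  have h1 := Zf_mono d h.2.1 z (i' := N)
  rw [Zf_apex] at h1
  have h2 := h.2.2.1
  omega

lemma stopP_prefix (d : Fin k) {m i : ℕ} {z z' : Pair k N K} (h : PrefAgree i z z')
    (hs : stopP d m i z) : stopP d m i z' := by
  obtain ⟨h1, h2, h3, h4, h5⟩ := hs
  refine ⟨h1, h2, ?_, ?_, ?_⟩
  · rw [← Zf_prefix d le_rfl h]; exact h3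
  · rw [← Za_prefix le_rfl h]; exact h4
  · intro j hj hj1
    rw [← Zf_prefix d hj.le h]
    exact h5 j hj hj1

lemma stop_unique (d : Fin k) {m i i' : ℕ} {z : Pair k N K}
    (h : stopP d m i z) (h' : stopP d m i' z) : i = i' := by
  by_contra hne
  rcases Nat.lt_or_ge i i' with hlt | hge
  · exact h'.2.2.2.2 i hlt h.1 h.2.2.1
  · exact h.2.2.2.2 i' (by omega) h'.1 h'.2.2.1

lemma stop_exists (hk : 1 ≤ k) (d : Fin k) (hd : (d : ℕ) = k - 1) (hN : 1 ≤ N)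
    {m : ℕ} {z : Pair k N K} (hm : m + 1 ≤ Xc d z) : ∃ i, stopP d m i z := by
  rcases Nat.eq_zero_or_pos m with rfl | hm0
  · exact ⟨1, le_rfl, hN, Zf_one d z, Za_one z, fun j hj hj1 => by omega⟩
  · have hP : ∃ i, m ≤ Zf d i z := ⟨N, by rw [Zf_apex]; omega⟩
    set i₀ := Nat.find hP with hi₀
    have h0 : m ≤ Zf d i₀ z := Nat.find_spec hP
    have hmin : ∀ j, j < i₀ → Zf d j z < m := fun j hj => by
      have := Nat.find_min hP hj
      omega
    have hi₀N : i₀ ≤ N := Nat.find_le (by rw [Zf_apex]; omega)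
    have hi₀1 : 1 ≤ i₀ := by
      rcases Nat.eq_zero_or_pos i₀ with h | h
      · exfalso
        have := Zf_zero d z
        rw [← h] at this
        omega
      · exact h
    clear_value i₀
    have hZfeq : Zf d i₀ z = m := by
      obtain ⟨j, rfl⟩ : ∃ j, i₀ = j + 1 := ⟨i₀ - 1, by omega⟩
      have h1 := Zf_succ_le d j z
      rcases Nat.eq_zero_or_pos j with rfl | hj
      · have h2 : Zf d (0 + 1) z = 0 := by simpa using Zf_one d z
        omega
      · have := hmin j (by omega)
        omega
    have hZa : Za i₀ z = m := by
      have h1 := Zf_le_Za d i₀ z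
      rcases Nat.lt_or_ge (Zf d i₀ z) (Za i₀ z) with hlt | hge
      · exfalso
        have := Xc_eq_of_lt hk d hd hlt
        omega
      · omega
    exact ⟨i₀, hi₀1, hi₀N, hZfeq, hZa, fun j hj hj1 => by have := hmin j hj; omega⟩

/-- Canonical representative for the σ-algebra atom after `i` reveals. -/
noncomputable def keyfun (d : Fin k) (i : ℕ) (ω : Fin N → Str k K) : Fin N → Str k K :=
  fun j => if (j : ℕ) < i then sortedSeq ω j else (fun _ => d)

lemma keyfun_eq_iff (d : Fin k) (i : ℕ) (ω ω₀ : Fin N → Str k K) :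
    keyfun d i ω = keyfun d i ω₀ ↔
      ∀ j : Fin N, (j : ℕ) < i → sortedSeq ω j = sortedSeq ω₀ j := by
  constructor
  · intro h j hj
    have := congrFun h j
    simpa [keyfun, hj] using this
  · intro h
    funext j
    by_cases hj : (j : ℕ) < i
    · simp [keyfun, hj, h j hj]
    · simp [keyfun, hj]

lemma filter_cond_iff (d : Fin k) (i : ℕ) (ω ω₀ : Fin N → Str k K) :
    (∀ j : Fin N, (j : ℕ) < i → sortedSeq ω j = keyfun d i ω₀ j) ↔
      keyfun d i ω = keyfun d i ω₀ := by
  rw [keyfun_eq_iff]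
  constructor
  · intro h j hj
    have := h j hj
    rwa [keyfun, if_pos hj] at this
  · intro h j hj
    rw [h j hj, keyfun, if_pos hj]

end Aux4
section Aux5
variable {k N K : ℕ}

lemma PrefAgree.symm {i : ℕ} {z z' : Pair k N K} (h : PrefAgree i z z') : PrefAgree i z' z :=
  ⟨fun j hj => (h.1 j hj).symm, fun j hj => (h.2 j hj).symm⟩

noncomputable def atomA (d : Fin k) (i : ℕ) (z₀ : Pair k N K) : Finset (Pair k N K) :=
  Finset.univ.filter (fun z =>
    keyfun d i z.1 = keyfun d i z₀.1 ∧ keyfun d i z.2 = keyfun d i z₀.2)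

noncomputable def Sm (p : Fin k → ℝ) (d : Fin k) (N K : ℕ) (m : ℕ) : ℝ :=
  ∑ z ∈ Finset.univ.filter (fun z : Pair k N K => m ≤ Xc d z), wP p z

lemma Sm_nonneg (p : Fin k → ℝ) (hpos : ∀ i, 0 < p i) (d : Fin k) (m : ℕ) :
    0 ≤ Sm p d N K m :=
  Finset.sum_nonneg fun z _ => wP_nonneg hpos z

lemma Sm_zero (p : Fin k → ℝ) (hsum : ∑ i, p i = 1) (d : Fin k) :
    Sm p d N K 0 = 1 := by
  unfold Sm
  rw [Finset.filter_true_of_mem (fun z _ => Nat.zero_le _)]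
  exact sum_wP hsum

lemma Sm_step (hk : 1 ≤ k) (p : Fin k → ℝ) (hpos : ∀ i, 0 < p i)
    (d : Fin k) (hd : (d : ℕ) = k - 1) (γ : ℝ) (hγ : 0 < γ)
    (hcondP : ∀ i : ℕ, 1 ≤ i → i ≤ N → ∀ z₀ : Pair k N K,
      ∑ z ∈ atomA d i z₀, wP p z * ((Xc d z : ℝ) - (Za i z : ℝ))
        ≤ γ * ∑ z ∈ atomA d i z₀, wP p z)
    (m : ℕ) : Sm p d N K (m + 1) ≤ γ * Sm p d N K m := by
  classical
  have hSm0 : 0 ≤ Sm p d N K m := Sm_nonneg p hpos d m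
  rcases Nat.eq_zero_or_pos N with hN | hN
  · have hempty : Finset.univ.filter (fun z : Pair k N K => m + 1 ≤ Xc d z) = ∅ := by
      rw [Finset.filter_eq_empty_iff]
      intro z _
      have := Xc_le_N d z
      omega
    unfold Sm
    rw [hempty, Finset.sum_empty]
    positivity
  have hstopA : ∀ z ∈ Finset.univ.filter (fun z : Pair k N K => m + 1 ≤ Xc d z),
      ∃ i, stopP d m i z := by
    intro z hz
    rw [Finset.mem_filter] at hz
    exact stop_exists hk d hd hN hz.2
  set σ : Pair k N K → ℕ := fun z => sInf {i | stopP d m i z} with hσ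
  have hσ_spec : ∀ z ∈ Finset.univ.filter (fun z : Pair k N K => m + 1 ≤ Xc d z),
      stopP d m (σ z) z := fun z hz => Nat.sInf_mem (hstopA z hz)
  have hmaps : ∀ z ∈ Finset.univ.filter (fun z : Pair k N K => m + 1 ≤ Xc d z),
      σ z ∈ Finset.Icc 1 N := fun z hz =>
    Finset.mem_Icc.mpr ⟨(hσ_spec z hz).1, (hσ_spec z hz).2.1⟩
  have hsplit : ∑ z ∈ Finset.univ.filter (fun z : Pair k N K => m + 1 ≤ Xc d z), wP p z
      = ∑ i ∈ Finset.Icc 1 N,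
          ∑ z ∈ (Finset.univ.filter (fun z : Pair k N K => m + 1 ≤ Xc d z)).filter
            (fun z => σ z = i), wP p z :=
    (Finset.sum_fiberwise_of_maps_to hmaps _).symm
  have hper : ∀ i ∈ Finset.Icc 1 N,
      ∑ z ∈ (Finset.univ.filter (fun z : Pair k N K => m + 1 ≤ Xc d z)).filter
          (fun z => σ z = i), wP p z
        ≤ γ * ∑ z ∈ Finset.univ.filter (fun z : Pair k N K => stopP d m i z), wP p z := by
    intro i hi
    rw [Finset.mem_Icc] at hi
    have hsubC : (Finset.univ.filter (fun z : Pair k N K => m + 1 ≤ Xc d z)).filter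
        (fun z => σ z = i) ⊆ Finset.univ.filter (fun z : Pair k N K => stopP d m i z) := by
      intro z hz
      rw [Finset.mem_filter] at hz
      have h := hσ_spec z hz.1
      rw [hz.2] at h
      rw [Finset.mem_filter]
      exact ⟨Finset.mem_univ _, h⟩
    have hb2 : ∑ z ∈ (Finset.univ.filter (fun z : Pair k N K => m + 1 ≤ Xc d z)).filter
          (fun z => σ z = i), wP p z
        ≤ ∑ z ∈ (Finset.univ.filter (fun z : Pair k N K => m + 1 ≤ Xc d z)).filter
          (fun z => σ z = i), wP p z * ((Xc d z : ℝ) - (Za i z : ℝ)) := by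
      apply Finset.sum_le_sum
      intro z hz
      have hzC := hsubC hz
      rw [Finset.mem_filter] at hzC
      have hstop := hzC.2
      rw [Finset.mem_filter, Finset.mem_filter] at hz
      have hX : (m : ℝ) + 1 ≤ (Xc d z : ℝ) := by exact_mod_cast hz.1.2
      have hZa : (Za i z : ℝ) = (m : ℝ) := by exact_mod_cast hstop.2.2.2.1
      have hw := wP_nonneg hpos z
      nlinarith
    have hb3 : ∑ z ∈ (Finset.univ.filter (fun z : Pair k N K => m + 1 ≤ Xc d z)).filter
          (fun z => σ z = i), wP p z * ((Xc d z : ℝ) - (Za i z : ℝ))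
        ≤ ∑ z ∈ Finset.univ.filter (fun z : Pair k N K => stopP d m i z),
            wP p z * ((Xc d z : ℝ) - (Za i z : ℝ)) := by
      apply Finset.sum_le_sum_of_subset_of_nonneg hsubC
      intro z hzC _
      rw [Finset.mem_filter] at hzC
      have hstop := hzC.2
      have h1 : Zf d i z ≤ Xc d z := Zf_le_Xc d i z
      have h2 : Zf d i z = m := hstop.2.2.1
      have h3 : Za i z = m := hstop.2.2.2.1
      have h4 : (Za i z : ℝ) ≤ (Xc d z : ℝ) := by exact_mod_cast by omega
      have hw := wP_nonneg hpos z
      nlinarith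
    have hb4 : ∑ z ∈ Finset.univ.filter (fun z : Pair k N K => stopP d m i z),
          wP p z * ((Xc d z : ℝ) - (Za i z : ℝ))
        ≤ γ * ∑ z ∈ Finset.univ.filter (fun z : Pair k N K => stopP d m i z), wP p z := by
      have hmapsκ : ∀ z ∈ Finset.univ.filter (fun z : Pair k N K => stopP d m i z),
          (fun z : Pair k N K => (keyfun d i z.1, keyfun d i z.2)) z ∈
            (Finset.univ.filter (fun z : Pair k N K => stopP d m i z)).image
              (fun z : Pair k N K => (keyfun d i z.1, keyfun d i z.2)) :=
        fun z hz => Finset.mem_image_of_mem _ hz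
      rw [← Finset.sum_fiberwise_of_maps_to hmapsκ
            (fun z => wP p z * ((Xc d z : ℝ) - (Za i z : ℝ))),
          ← Finset.sum_fiberwise_of_maps_to hmapsκ (fun z => wP p z), Finset.mul_sum]
      apply Finset.sum_le_sum
      intro v hv
      obtain ⟨z₀, hz₀C, hz₀v⟩ := Finset.mem_image.mp hv
      rw [Finset.mem_filter] at hz₀C
      have hfib : (Finset.univ.filter (fun z : Pair k N K => stopP d m i z)).filter
          (fun z => (fun z : Pair k N K => (keyfun d i z.1, keyfun d i z.2)) z = v)
          = atomA d i z₀ := by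
        ext z
        simp only [atomA, Finset.mem_filter, Finset.mem_univ, true_and]
        constructor
        · rintro ⟨hstopz, hkv⟩
          have hkey : (keyfun d i z.1, keyfun d i z.2)
              = (keyfun d i z₀.1, keyfun d i z₀.2) := by
            rw [hkv, ← hz₀v]
          exact ⟨congrArg Prod.fst hkey, congrArg Prod.snd hkey⟩
        · rintro ⟨h1, h2⟩
          have hpref : PrefAgree i z z₀ :=
            ⟨(keyfun_eq_iff d i _ _).mp h1, (keyfun_eq_iff d i _ _).mp h2⟩
          refine ⟨stopP_prefix d hpref.symm hz₀C.2, ?_⟩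
          rw [← hz₀v]
          exact Prod.ext h1 h2
      rw [hfib]
      exact hcondP i hi.1 hi.2 z₀
    calc ∑ z ∈ (Finset.univ.filter (fun z : Pair k N K => m + 1 ≤ Xc d z)).filter
          (fun z => σ z = i), wP p z
        ≤ ∑ z ∈ Finset.univ.filter (fun z : Pair k N K => stopP d m i z),
            wP p z * ((Xc d z : ℝ) - (Za i z : ℝ)) := le_trans hb2 hb3
      _ ≤ γ * ∑ z ∈ Finset.univ.filter (fun z : Pair k N K => stopP d m i z), wP p z := hb4
  have hdisj : (↑(Finset.Icc 1 N) : Set ℕ).PairwiseDisjoint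
      (fun i => Finset.univ.filter (fun z : Pair k N K => stopP d m i z)) := by
    intro i _ j _ hij
    simp only [Function.onFun]
    rw [Finset.disjoint_left]
    intro z hzi hzj
    rw [Finset.mem_filter] at hzi hzj
    exact hij (stop_unique d hzi.2 hzj.2)
  have hlast : ∑ i ∈ Finset.Icc 1 N,
      ∑ z ∈ Finset.univ.filter (fun z : Pair k N K => stopP d m i z), wP p z
        ≤ Sm p d N K m := by
    rw [← Finset.sum_biUnion hdisj]
    apply Finset.sum_le_sum_of_subset_of_nonneg
    · intro z hz
      rw [Finset.mem_biUnion] at hz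
      obtain ⟨i, _, hzi⟩ := hz
      rw [Finset.mem_filter] at hzi
      exact Finset.mem_filter.mpr ⟨Finset.mem_univ _, stopP_le_Xc hzi.2⟩
    · intro z _ _
      exact wP_nonneg hpos z
  calc Sm p d N K (m + 1)
      = ∑ z ∈ Finset.univ.filter (fun z : Pair k N K => m + 1 ≤ Xc d z), wP p z := rfl
    _ = ∑ i ∈ Finset.Icc 1 N,
          ∑ z ∈ (Finset.univ.filter (fun z : Pair k N K => m + 1 ≤ Xc d z)).filter
            (fun z => σ z = i), wP p z := hsplit
    _ ≤ ∑ i ∈ Finset.Icc 1 N,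
          γ * ∑ z ∈ Finset.univ.filter (fun z : Pair k N K => stopP d m i z), wP p z :=
        Finset.sum_le_sum hper
    _ = γ * ∑ i ∈ Finset.Icc 1 N,
          ∑ z ∈ Finset.univ.filter (fun z : Pair k N K => stopP d m i z), wP p z := by
        rw [Finset.mul_sum]
    _ ≤ γ * Sm p d N K m := mul_le_mul_of_nonneg_left hlast hγ.le

lemma Sm_le (hk : 1 ≤ k) (p : Fin k → ℝ) (hpos : ∀ i, 0 < p i) (hsum : ∑ i, p i = 1)
    (d : Fin k) (hd : (d : ℕ) = k - 1) (γ : ℝ) (hγ : 0 < γ)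
    (hcondP : ∀ i : ℕ, 1 ≤ i → i ≤ N → ∀ z₀ : Pair k N K,
      ∑ z ∈ atomA d i z₀, wP p z * ((Xc d z : ℝ) - (Za i z : ℝ))
        ≤ γ * ∑ z ∈ atomA d i z₀, wP p z)
    (m : ℕ) : Sm p d N K m ≤ γ ^ m := by
  induction m with
  | zero => rw [Sm_zero p hsum d]; simp
  | succ n ih =>
    calc Sm p d N K (n + 1) ≤ γ * Sm p d N K n := Sm_step hk p hpos d hd γ hγ hcondP n
      _ ≤ γ * γ ^ n := mul_le_mul_of_nonneg_left ih hγ.le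
      _ = γ ^ (n + 1) := by ring

end Aux5
section Aux6
variable {k N K : ℕ}

lemma telescope_sum (f : ℕ → ℝ) : ∀ n : ℕ,
    ∑ m ∈ Finset.Icc 1 n, (f m - f (m - 1)) = f n - f 0 := by
  intro n
  induction n with
  | zero => simp
  | succ n ih =>
    rw [Finset.sum_Icc_succ_top (by omega : 1 ≤ n + 1), ih]
    simp only [Nat.add_sub_cancel]
    ring

lemma geom_range_le {x : ℝ} (h0 : 0 ≤ x) (hx : x ≤ 1 / 10) (n : ℕ) :
    ∑ j ∈ Finset.range n, x ^ j ≤ 10 / 9 := by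
  induction n with
  | zero => norm_num
  | succ n ih =>
    rw [geom_sum_succ]
    have hnon : 0 ≤ ∑ j ∈ Finset.range n, x ^ j :=
      Finset.sum_nonneg fun j _ => pow_nonneg h0 j
    nlinarith

lemma geom_Icc_le {x : ℝ} (h0 : 0 ≤ x) (hx : x ≤ 1 / 10) (n : ℕ) :
    ∑ m ∈ Finset.Icc 1 n, x ^ m ≤ 2 * x := by
  have hId : ∑ m ∈ Finset.Icc 1 n, x ^ m = x * ∑ j ∈ Finset.range n, x ^ j := by
    induction n with
    | zero => simp
    | succ n ih =>
      rw [Finset.sum_Icc_succ_top (by omega : 1 ≤ n + 1), ih, Finset.sum_range_succ]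
      ring
  rw [hId]
  calc x * ∑ j ∈ Finset.range n, x ^ j ≤ x * (10 / 9) :=
        mul_le_mul_of_nonneg_left (geom_range_le h0 hx n) h0
    _ ≤ 2 * x := by nlinarith

lemma final_bound (hk : 1 ≤ k) (p : Fin k → ℝ) (hpos : ∀ i, 0 < p i)
    (hsum : ∑ i, p i = 1) (d : Fin k) (hd : (d : ℕ) = k - 1) (γ : ℝ) (hγ : 0 < γ)
    (hcondP : ∀ i : ℕ, 1 ≤ i → i ≤ N → ∀ z₀ : Pair k N K,
      ∑ z ∈ atomA d i z₀, wP p z * ((Xc d z : ℝ) - (Za i z : ℝ))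
        ≤ γ * ∑ z ∈ atomA d i z₀, wP p z)
    (t : ℝ) (ht : 0 < t) (htγ : Real.exp t * γ ≤ 1 / 10) :
    ∑ z : Pair k N K, wP p z * Real.exp (t * (Xc d z : ℝ)) ≤ 1 + 2 * Real.exp t * γ := by
  classical
  set f : ℕ → ℝ := fun m => Real.exp (t * (m : ℝ)) with hf
  have hexp : ∀ z : Pair k N K, Real.exp (t * (Xc d z : ℝ))
      = 1 + ∑ m ∈ Finset.Icc 1 N, (if m ≤ Xc d z then f m - f (m - 1) else 0) := by
    intro z
    have hXN : Xc d z ≤ N := Xc_le_N d z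
    have hfil : (Finset.Icc 1 N).filter (fun m => m ≤ Xc d z) = Finset.Icc 1 (Xc d z) := by
      ext m
      simp only [Finset.mem_filter, Finset.mem_Icc]
      omega
    rw [← Finset.sum_filter, hfil, telescope_sum f (Xc d z)]
    have hf0 : f 0 = 1 := by simp [hf]
    rw [hf0]
    ring
  have hΔ : ∀ m : ℕ, 1 ≤ m → 0 ≤ f m - f (m - 1) ∧ f m - f (m - 1) ≤ f m := by
    intro m hm
    constructor
    · have : f (m - 1) ≤ f m := by
        apply Real.exp_le_exp.mpr
        have : ((m - 1 : ℕ) : ℝ) ≤ (m : ℝ) := by exact_mod_cast Nat.sub_le m 1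
        nlinarith
      linarith
    · have : 0 ≤ f (m - 1) := (Real.exp_pos _).le
      linarith
  calc ∑ z : Pair k N K, wP p z * Real.exp (t * (Xc d z : ℝ))
      = ∑ z : Pair k N K, (wP p z + ∑ m ∈ Finset.Icc 1 N,
          (if m ≤ Xc d z then wP p z * (f m - f (m - 1)) else 0)) := by
        apply Finset.sum_congr rfl
        intro z _
        rw [hexp z, mul_add, mul_one, Finset.mul_sum]
        congr 1
        apply Finset.sum_congr rfl
        intro m _
        rw [mul_ite, mul_zero]
    _ = (∑ z : Pair k N K, wP p z) + ∑ z : Pair k N K, ∑ m ∈ Finset.Icc 1 N,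
          (if m ≤ Xc d z then wP p z * (f m - f (m - 1)) else 0) := by
        rw [Finset.sum_add_distrib]
    _ = 1 + ∑ m ∈ Finset.Icc 1 N, ∑ z : Pair k N K,
          (if m ≤ Xc d z then wP p z * (f m - f (m - 1)) else 0) := by
        rw [sum_wP hsum, Finset.sum_comm]
    _ = 1 + ∑ m ∈ Finset.Icc 1 N, (Sm p d N K m) * (f m - f (m - 1)) := by
        congr 1
        apply Finset.sum_congr rfl
        intro m _
        rw [Sm, Finset.sum_filter, Finset.sum_mul]
        apply Finset.sum_congr rfl
        intro z _
        rw [ite_mul, zero_mul]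
    _ ≤ 1 + ∑ m ∈ Finset.Icc 1 N, (Real.exp t * γ) ^ m := by
        refine add_le_add le_rfl ?_
        apply Finset.sum_le_sum
        intro m hm
        rw [Finset.mem_Icc] at hm
        have hΔm := hΔ m hm.1
        have hS := Sm_le hk p hpos hsum d hd γ hγ hcondP m
        have hS0 := Sm_nonneg p hpos d m (N := N) (K := K)
        have hfm : f m = (Real.exp t) ^ m := by
          rw [hf]
          simp only []
          rw [mul_comm, Real.exp_nat_mul]
        calc Sm p d N K m * (f m - f (m - 1)) ≤ γ ^ m * (f m - f (m - 1)) :=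
              mul_le_mul_of_nonneg_right hS hΔm.1
          _ ≤ γ ^ m * f m := mul_le_mul_of_nonneg_left hΔm.2 (pow_nonneg hγ.le m)
          _ = (Real.exp t * γ) ^ m := by rw [hfm, mul_pow]; ring
    _ ≤ 1 + 2 * Real.exp t * γ := by
        have hx0 : 0 ≤ Real.exp t * γ := mul_nonneg (Real.exp_pos t).le hγ.le
        have := geom_Icc_le hx0 htγ N
        linarith

end Aux6
/-- **Lemma (geometric domination)**: if at every stage `i` of the joint exploration of two
independent `p`-random sorted sequences, the conditional expectation (given the first `i`
strings of each) of the number of not-yet-revealed forward shared edges is at most `γ`, then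
for every `t > 0` with `e^t γ ≤ 1/10` one has `E[exp(t |E_forward(G,G')|)] ≤ 1 + 2 e^t γ`.
Conditional expectations are phrased as inequalities between sums weighted by `seqP`. -/
theorem geometric_domination (k : ℕ) (hk : 2 ≤ k) (p : Fin k → ℝ)
    (hpos : ∀ i, 0 < p i) (hsum : ∑ i, p i = 1) (N K : ℕ) (γ : ℝ) (hγ : 0 < γ)
    (hcond : ∀ i : ℕ, 1 ≤ i → i ≤ N → ∀ τ τ' : Fin N → Str k K,
      (∑ ω ∈ univ.filter (fun ω : Fin N → Str k K =>
            ∀ j : Fin N, (j : ℕ) < i → sortedSeq ω j = τ j),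
        ∑ ω' ∈ univ.filter (fun ω' : Fin N → Str k K =>
            ∀ j : Fin N, (j : ℕ) < i → sortedSeq ω' j = τ' j),
          seqP p ω * seqP p ω' *
            (((edgesAvoiding ⟨k - 1, by omega⟩ (sortedSeq ω) ∩
                edgesAvoiding ⟨k - 1, by omega⟩ (sortedSeq ω')).card : ℝ) -
              (((edgeSet (sortedSeq ω) ∩ edgeSet (sortedSeq ω')).filter
                  (fun e => (e.2 : ℕ) < i)).card : ℝ)))
        ≤ γ *
          ∑ ω ∈ univ.filter (fun ω : Fin N → Str k K =>
              ∀ j : Fin N, (j : ℕ) < i → sortedSeq ω j = τ j),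
            ∑ ω' ∈ univ.filter (fun ω' : Fin N → Str k K =>
                ∀ j : Fin N, (j : ℕ) < i → sortedSeq ω' j = τ' j),
              seqP p ω * seqP p ω') :
    ∀ t : ℝ, 0 < t → Real.exp t * γ ≤ 1 / 10 →
      ∑ ω : Fin N → Str k K, ∑ ω' : Fin N → Str k K,
          seqP p ω * seqP p ω' *
            Real.exp (t * ((edgesAvoiding ⟨k - 1, by omega⟩ (sortedSeq ω) ∩
                edgesAvoiding ⟨k - 1, by omega⟩ (sortedSeq ω')).card : ℝ))
        ≤ 1 + 2 * Real.exp t * γ := by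

  intro t ht htγ
  classical
  have hk1 : 1 ≤ k := by omega
  set d : Fin k := ⟨k - 1, by omega⟩ with hdd
  have hd : (d : ℕ) = k - 1 := rfl
  have hcondP : ∀ i : ℕ, 1 ≤ i → i ≤ N → ∀ z₀ : Pair k N K,
      ∑ z ∈ atomA d i z₀, wP p z * ((Xc d z : ℝ) - (Za i z : ℝ))
        ≤ γ * ∑ z ∈ atomA d i z₀, wP p z := by
    intro i h1 h2 z₀
    have h := hcond i h1 h2 (keyfun d i z₀.1) (keyfun d i z₀.2)
    have hprod : (Finset.univ.filter (fun ω : Fin N → Str k K =>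
          ∀ j : Fin N, (j : ℕ) < i → sortedSeq ω j = keyfun d i z₀.1 j)) ×ˢ
        (Finset.univ.filter (fun ω' : Fin N → Str k K =>
          ∀ j : Fin N, (j : ℕ) < i → sortedSeq ω' j = keyfun d i z₀.2 j))
        = atomA d i z₀ := by
      ext z
      simp only [Finset.mem_product, Finset.mem_filter, Finset.mem_univ, true_and, atomA]
      rw [filter_cond_iff d i z.1 z₀.1, filter_cond_iff d i z.2 z₀.2]
    calc ∑ z ∈ atomA d i z₀, wP p z * ((Xc d z : ℝ) - (Za i z : ℝ))
        = ∑ z ∈ (Finset.univ.filter (fun ω : Fin N → Str k K =>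
              ∀ j : Fin N, (j : ℕ) < i → sortedSeq ω j = keyfun d i z₀.1 j)) ×ˢ
            (Finset.univ.filter (fun ω' : Fin N → Str k K =>
              ∀ j : Fin N, (j : ℕ) < i → sortedSeq ω' j = keyfun d i z₀.2 j)),
            wP p z * ((Xc d z : ℝ) - (Za i z : ℝ)) := by rw [hprod]
      _ ≤ γ * ∑ z ∈ (Finset.univ.filter (fun ω : Fin N → Str k K =>
              ∀ j : Fin N, (j : ℕ) < i → sortedSeq ω j = keyfun d i z₀.1 j)) ×ˢ
            (Finset.univ.filter (fun ω' : Fin N → Str k K =>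
              ∀ j : Fin N, (j : ℕ) < i → sortedSeq ω' j = keyfun d i z₀.2 j)),
            wP p z := by
          rw [Finset.sum_product, Finset.sum_product]
          exact h
      _ = γ * ∑ z ∈ atomA d i z₀, wP p z := by rw [hprod]
  have hfin := final_bound hk1 p hpos hsum d hd γ hγ hcondP t ht htγ
  rw [Fintype.sum_prod_type] at hfin
  exact hfin


end RiffleShuffle
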